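/- For all p ≥ 1 and β > 0 with p ≤ 2β, the Bell function satisfies B(p,β)^{1/p} ≤ K₊ · β, where K₊ = exp((e² − 3)/2). -/

import Mathlib

open Real

noncomputable def Bell (p β : ℝ) : ℝ :=
  Real.exp (-β) * ∑' k : ℕ, (k : ℝ) ^ p * β ^ k / (Nat.factorial k)

/-!
Chernoff's method: for every `λ > 0`, `x ≤ (p / (e λ)) exp (λ x / p)` (this is `y ≤ exp (y - 1)`),
so `k ^ p ≤ (p / (e λ)) ^ p exp (λ k)` and summing against the Poisson weights gives
`B(p, β) ≤ (p / (e λ)) ^ p exp (β (e ^ λ - 1))`. With `λ = p / β` the `p`-th root becomes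
`(β / e) exp ((e ^ λ - 1) / λ)`, and since `λ ≤ 2` convexity of `exp` bounds the secant slope
`(e ^ λ - 1) / λ` by `(e ^ 2 - 1) / 2`.
-/

lemma le_div_mul_exp_mul_div {p l x : ℝ} (hp : 0 < p) (hl : 0 < l) :
    x ≤ p / (exp 1 * l) * exp (l * x / p) := by
  have hy : l * x / p ≤ exp (l * x / p - 1) := by simpa using add_one_le_exp (l * x / p - 1)
  calc x = p / l * (l * x / p) := by field_simp
    _ ≤ p / l * exp (l * x / p - 1) := by gcongr
    _ = p / (exp 1 * l) * exp (l * x / p) := by rw [exp_sub]; field_simp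

lemma rpow_le_div_mul_exp_mul {p l x : ℝ} (hp : 0 < p) (hl : 0 < l) (hx : 0 ≤ x) :
    x ^ p ≤ (p / (exp 1 * l)) ^ p * exp (l * x) := by
  calc x ^ p ≤ (p / (exp 1 * l) * exp (l * x / p)) ^ p :=
        rpow_le_rpow hx (le_div_mul_exp_mul_div hp hl) hp.le
    _ = (p / (exp 1 * l)) ^ p * exp (l * x) := by
        rw [mul_rpow (by positivity) (exp_pos _).le, ← exp_mul, div_mul_cancel₀ _ hp.ne']

lemma exp_sub_one_div_le_of_le {x y : ℝ} (hx : 0 < x) (hxy : x ≤ y) :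
    (exp x - 1) / x ≤ (exp y - 1) / y := by
  simpa using convexOn_exp.secant_mono (Set.mem_univ 0) (Set.mem_univ x) (Set.mem_univ y)
    hx.ne' (hx.trans_le hxy).ne' hxy

section Bell

variable {p β : ℝ}

lemma bell_nonneg (hβ : 0 ≤ β) : 0 ≤ Bell p β :=
  mul_nonneg (exp_pos _).le (tsum_nonneg fun _ => by positivity)

lemma bell_le (hp : 0 < p) (hβ : 0 ≤ β) {l : ℝ} (hl : 0 < l) :
    Bell p β ≤ (p / (exp 1 * l)) ^ p * exp (β * (exp l - 1)) := by
  set c := (p / (exp 1 * l)) ^ p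
  have hterm : ∀ k : ℕ, (k : ℝ) ^ p * β ^ k / k.factorial ≤
      c * ((β * exp l) ^ k / k.factorial) := fun k => by
    rw [mul_pow, ← exp_nat_mul, ← mul_div_assoc, mul_comm (β ^ k), ← mul_assoc, mul_comm _ l]
    gcongr
    exact rpow_le_div_mul_exp_mul hp hl k.cast_nonneg
  have hexp : HasSum (fun k : ℕ => c * ((β * exp l) ^ k / k.factorial)) (c * exp (β * exp l)) := by
    rw [exp_eq_exp_ℝ]
    exact (NormedSpace.expSeries_div_hasSum_exp _).mul_left c
  have hsum : ∑' k : ℕ, (k : ℝ) ^ p * β ^ k / k.factorial ≤ c * exp (β * exp l) :=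
    hasSum_le hterm (Summable.of_nonneg_of_le (fun _ => by positivity) hterm hexp.summable).hasSum
      hexp
  calc Bell p β ≤ exp (-β) * (c * exp (β * exp l)) := by
        unfold Bell; gcongr
    _ = c * exp (β * (exp l - 1)) := by
        rw [mul_sub, mul_one, sub_eq_neg_add, exp_add]; ring

lemma bell_rpow_inv_le (hp : 0 < p) (hβ : 0 ≤ β) {l : ℝ} (hl : 0 < l) :
    Bell p β ^ (1 / p) ≤ p / (exp 1 * l) * exp (β * (exp l - 1) / p) := by
  calc Bell p β ^ (1 / p) ≤ ((p / (exp 1 * l)) ^ p * exp (β * (exp l - 1))) ^ (1 / p) := by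
        gcongr
        · exact bell_nonneg hβ
        · exact bell_le hp hβ hl
    _ = p / (exp 1 * l) * exp (β * (exp l - 1) / p) := by
        rw [mul_rpow (by positivity) (exp_pos _).le, ← rpow_mul (by positivity),
          mul_one_div_cancel hp.ne', rpow_one, ← exp_mul, mul_one_div]

end Bell

theorem bell_upper_Kplus (p β : ℝ) (hp : 1 ≤ p) (hβ : 0 < β) (hpβ : p ≤ 2 * β) :
    Bell p β ^ (1 / p) ≤ Real.exp ((Real.exp 1 ^ 2 - 3) / 2) * β := by
  have hp0 : 0 < p := by linarith
  set l := p / β with hl_def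
  have hl : 0 < l := by positivity
  have hl2 : l ≤ 2 := by rwa [div_le_iff₀ hβ]
  have hslope : (exp l - 1) / l ≤ (exp 1 ^ 2 - 1) / 2 := by
    simpa using exp_sub_one_div_le_of_le hl hl2
  calc Bell p β ^ (1 / p) ≤ p / (exp 1 * l) * exp (β * (exp l - 1) / p) :=
        bell_rpow_inv_le hp0 hβ.le hl
    _ = β * exp ((exp l - 1) / l - 1) := by
        rw [exp_sub, hl_def]; field_simp
    _ ≤ β * exp ((exp 1 ^ 2 - 1) / 2 - 1) := by gcongr
    _ = exp ((exp 1 ^ 2 - 3) / 2) * β := by ring_nf
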